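/- arXiv:2503.04477 — 2 statements merged into one kernel-verified Lean document; each statement's English description precedes it below -/
import Mathlib

section
/- For a nonnegative integer z, evaluating the operator (d/dθ + 1)^z applied to the Poisson pmf p(x;θ) = θ^x e^{-θ}/x! at θ = 0 gives the Kronecker delta at z: ((d/dθ + 1)^z p(·;θ))(x)|_{θ=0} = 1 if x = z and 0 otherwise, for all natural numbers x. -/
/-- One-dimensional Poisson pmf on the naturals. -/
noncomputable def poissonPmf (x : ℕ) (θ : ℝ) : ℝ :=
  θ ^ x * Real.exp (-θ) / (x.factorial : ℝ)

lemma hasDerivAt_poissonPmf (x : ℕ) (θ : ℝ) :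
    HasDerivAt (poissonPmf x) ((x * θ ^ (x - 1) * Real.exp (-θ) - θ ^ x * Real.exp (-θ)) / (x.factorial : ℝ)) θ := by
  have h2 : HasDerivAt (fun t : ℝ => Real.exp (-t)) (-Real.exp (-θ)) θ := by
    have := (Real.hasDerivAt_exp (-θ)).comp θ (hasDerivAt_neg θ)
    simpa [Function.comp_def] using this
  have h1 : HasDerivAt (fun t : ℝ => t ^ x) (x * θ ^ (x - 1)) θ := hasDerivAt_pow x θ
  have := (h1.mul h2).div_const (x.factorial : ℝ)
  refine this.congr_deriv ?_
  ring

lemma step_succ (x : ℕ) :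
    (fun f : ℝ → ℝ => deriv f + f) (poissonPmf (x + 1)) = poissonPmf x := by
  funext θ
  have h := (hasDerivAt_poissonPmf (x + 1) θ).deriv
  simp only [Pi.add_apply, h]
  simp only [poissonPmf, Nat.factorial_succ, Nat.add_sub_cancel, Nat.cast_mul, Nat.cast_add,
    Nat.cast_one]
  have hf : (x.factorial : ℝ) ≠ 0 := Nat.cast_ne_zero.mpr x.factorial_ne_zero
  have hx1 : ((x : ℝ) + 1) ≠ 0 := by positivity
  field_simp
  ring

lemma step_zero :
    (fun f : ℝ → ℝ => deriv f + f) (poissonPmf 0) = 0 := by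
  funext θ
  have h := (hasDerivAt_poissonPmf 0 θ).deriv
  simp only [Pi.add_apply, h, Pi.zero_apply, poissonPmf]
  simp

theorem stmt1 (z : ℕ) (x : ℕ) :
    ((fun f : ℝ → ℝ => deriv f + f)^[z] (fun θ => poissonPmf x θ)) 0
      = if x = z then 1 else 0 := by
  induction z generalizing x with
  | zero =>
    simp only [Function.iterate_zero, id_eq, poissonPmf]
    rcases x with _ | x <;> simp
  | succ z ih =>
    rw [Function.iterate_succ_apply]
    rcases x with _ | x
    · have : (fun θ => poissonPmf 0 θ) = poissonPmf 0 := rfl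
      rw [this, show deriv (poissonPmf 0) + poissonPmf 0 = 0 from step_zero]
      have hz : ∀ n : ℕ, ((fun f : ℝ → ℝ => deriv f + f)^[n] (0 : ℝ → ℝ)) = 0 := by
        intro n
        induction n with
        | zero => rfl
        | succ n ihn => rw [Function.iterate_succ_apply, show deriv (0 : ℝ → ℝ) + 0 = 0 by funext t; simp only [Pi.add_apply, Pi.zero_apply, show (0 : ℝ → ℝ) = fun _ => (0:ℝ) from rfl, deriv_const]; simp, ihn]
      rw [hz]
      simp
    · have : (fun θ => poissonPmf (x + 1) θ) = poissonPmf (x + 1) := rfl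
      rw [this, show deriv (poissonPmf (x+1)) + poissonPmf (x+1) = poissonPmf x from step_succ x, ih x]
      simp [Nat.succ_inj]
end

section
/- Every one-dimensional delta distribution on the natural numbers can be represented as an absolutely convergent weighted sum of Poisson distributions: for each z ∈ ℕ there exists a real sequence (c_k)_{k≥0} such that for all x ∈ ℕ, δ_z(x) = ∑_{k=0}^∞ c_k · (k+1)^x e^{−(k+1)}/x!, with the series converging absolutely for each x. -/
namespace Stmt6

open Finset

/-- weight of node `j` among nodes `B + j' * G`, `j' ≤ mm`: divided-difference weight. -/
noncomputable def wt (B G mm : ℕ) (j : ℕ) : ℝ :=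
  (∏ j' ∈ (Finset.range (mm + 1)).erase j,
      (((B + j * G : ℕ) : ℝ) - ((B + j' * G : ℕ) : ℝ)))⁻¹

/-- `x`-th moment of the weights. -/
noncomputable def Sv (B G mm x : ℕ) : ℝ :=
  ∑ j ∈ Finset.range (mm + 1), wt B G mm j * ((B + j * G : ℕ) : ℝ) ^ x

/-- gap choice -/
noncomputable def gch (z i : ℕ) (e : ℝ) (B : ℕ) : ℕ :=
  B + ⌈((z + i + 1 : ℕ) : ℝ) ^ (z + i + 1) * (|e| + 1) * 2 ^ i⌉₊ + 1

/-- the main recursion: `dat z i = (ε_i, B_i, G_i)`. -/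
noncomputable def dat (z : ℕ) : ℕ → ℝ × ℕ × ℕ
  | 0 => ((z.factorial : ℝ), 1, gch z 0 (z.factorial : ℝ) 1)
  | (i + 1) =>
    (- ∑ p ∈ (Finset.range (i + 1)).attach,
        (dat z p.1).1 * Sv (dat z p.1).2.1 (dat z p.1).2.2 (z + p.1) (z + (i + 1)),
      (dat z i).2.1 + (z + i) * (dat z i).2.2 + 1,
      gch z (i + 1)
        (- ∑ p ∈ (Finset.range (i + 1)).attach,
          (dat z p.1).1 * Sv (dat z p.1).2.1 (dat z p.1).2.2 (z + p.1) (z + (i + 1)))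
        ((dat z i).2.1 + (z + i) * (dat z i).2.2 + 1))
  termination_by i => i
  decreasing_by
  all_goals first
  | exact Finset.mem_range.mp p.2
  | exact Nat.lt_succ_self i

noncomputable def eps (z i : ℕ) : ℝ := (dat z i).1
noncomputable def Bb (z i : ℕ) : ℕ := (dat z i).2.1
noncomputable def Gg (z i : ℕ) : ℕ := (dat z i).2.2
noncomputable def nod (z i j : ℕ) : ℕ := Bb z i + j * Gg z i
noncomputable def lam (z i j : ℕ) : ℝ := wt (Bb z i) (Gg z i) (z + i) j
noncomputable def S (z i x : ℕ) : ℝ := Sv (Bb z i) (Gg z i) (z + i) x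

lemma S_def (z i x : ℕ) :
    S z i x = ∑ j ∈ Finset.range (z + i + 1), lam z i j * ((nod z i j : ℕ) : ℝ) ^ x := rfl

lemma eps_zero (z : ℕ) : eps z 0 = (z.factorial : ℝ) := by
  simp [eps, dat]

lemma eps_succ (z i : ℕ) :
    eps z (i + 1) = - ∑ i' ∈ Finset.range (i + 1), eps z i' * S z i' (z + (i + 1)) := by
  show (dat z (i+1)).1 = _
  rw [dat]
  rw [neg_inj]
  exact Finset.sum_attach (Finset.range (i+1)) (fun i' => eps z i' * S z i' (z + (i + 1)))

lemma Bb_zero (z : ℕ) : Bb z 0 = 1 := by simp [Bb, dat]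

lemma Bb_succ (z i : ℕ) : Bb z (i + 1) = nod z i (z + i) + 1 := by
  show (dat z (i+1)).2.1 = _
  rw [dat]
  rfl

lemma Gg_eq (z i : ℕ) : Gg z i = gch z i (eps z i) (Bb z i) := by
  cases i with
  | zero => simp [Gg, dat, eps, Bb]
  | succ i =>
    show (dat z (i+1)).2.2 = _
    rw [dat]
    rw [eps_succ, Bb_succ]
    change gch z (i + 1)
      (-∑ p ∈ (Finset.range (i + 1)).attach, eps z p.1 * S z p.1 (z + (i + 1)))
      (nod z i (z + i) + 1) = _
    congr 1
    rw [neg_inj]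
    exact Finset.sum_attach (Finset.range (i+1)) (fun i' => eps z i' * S z i' (z + (i + 1)))

lemma Bb_le_Gg (z i : ℕ) : Bb z i + 1 ≤ Gg z i := by
  rw [Gg_eq, gch]; omega

lemma one_le_Gg (z i : ℕ) : 1 ≤ Gg z i := by
  have := Bb_le_Gg z i; omega

lemma one_le_Bb (z i : ℕ) : 1 ≤ Bb z i := by
  cases i with
  | zero => rw [Bb_zero]
  | succ i => rw [Bb_succ]; omega

lemma one_le_nod (z i j : ℕ) : 1 ≤ nod z i j := by
  have := one_le_Bb z i; unfold nod; omega

lemma nod_strictMono (z i : ℕ) : StrictMono (nod z i) := by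
  intro a b hab
  have := one_le_Gg z i
  unfold nod
  have : a * Gg z i < b * Gg z i := by
    apply Nat.mul_lt_mul_of_lt_of_le hab le_rfl; omega
  omega

lemma nod_lt_Bb_succ (z i j : ℕ) (hj : j ≤ z + i) : nod z i j < Bb z (i + 1) := by
  rw [Bb_succ]
  have : nod z i j ≤ nod z i (z + i) := (nod_strictMono z i).monotone hj
  omega

lemma Bb_strictMono (z : ℕ) : StrictMono (Bb z) := by
  apply strictMono_nat_of_lt_succ
  intro i
  have h := nod_lt_Bb_succ z i 0 (Nat.zero_le _)
  have : Bb z i ≤ nod z i 0 := by unfold nod; omega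
  omega

lemma nod_lt_nod (z i i' j j' : ℕ) (hii' : i < i') (hj : j ≤ z + i) :
    nod z i j < nod z i' j' := by
  have h1 : nod z i j < Bb z (i + 1) := nod_lt_Bb_succ z i j hj
  have h2 : Bb z (i + 1) ≤ Bb z i' := (Bb_strictMono z).monotone hii'
  have h3 : Bb z i' ≤ nod z i' j' := by unfold nod; omega
  omega

lemma nod_inj (z i i' j j' : ℕ) (hj : j ≤ z + i) (hj' : j' ≤ z + i')
    (h : nod z i j = nod z i' j') : i = i' ∧ j = j' := by
  rcases lt_trichotomy i i' with hi | hi | hi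
  · exact absurd h (Nat.ne_of_lt (nod_lt_nod z i i' j j' hi hj))
  · subst hi
    exact ⟨rfl, (nod_strictMono z i).injective h⟩
  · exact absurd h.symm (Nat.ne_of_lt (nod_lt_nod z i' i j' j hi hj'))

open Polynomial in
lemma S_eval (z i x : ℕ) (hx : x ≤ z + i) :
    S z i x = if x = z + i then 1 else 0 := by
  classical
  set mm := z + i with hmm
  set s : Finset ℕ := Finset.range (mm + 1) with hs
  set v : ℕ → ℝ := fun j => ((nod z i j : ℕ) : ℝ) with hv
  have hvinj : Set.InjOn v ↑s := fun a _ b _ hab =>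
    (nod_strictMono z i).injective (Nat.cast_injective hab)
  have hdeg : ((X : ℝ[X]) ^ x).degree < (s.card : ℕ) := by
    rw [hs, Finset.card_range, Polynomial.degree_X_pow]
    exact_mod_cast Nat.lt_succ_of_le hx
  have hrep := Lagrange.eq_interpolate (f := (X : ℝ[X]) ^ x) hvinj hdeg
  have hco := congrArg (fun p => Polynomial.coeff p mm) hrep
  simp only [Lagrange.interpolate_apply, Polynomial.finset_sum_coeff,
    Polynomial.coeff_C_mul, Polynomial.coeff_X_pow, Polynomial.eval_pow,
    Polynomial.eval_X] at hco
  have hbasis : ∀ j ∈ s, (Lagrange.basis s v j).coeff mm = lam z i j := by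
    intro j hj
    have hcard : (s.erase j).card = mm := by
      rw [Finset.card_erase_of_mem hj, hs, Finset.card_range]
      omega
    have hnd : ∀ p ∈ s.erase j, (Lagrange.basisDivisor (v j) (v p)).natDegree ≤ 1 := by
      intro p _
      unfold Lagrange.basisDivisor
      refine le_trans (Polynomial.natDegree_mul_le) ?_
      simp [Polynomial.natDegree_X_sub_C_le]
    have hprod := Polynomial.coeff_prod_of_natDegree_le
      (s := s.erase j) (fun p => Lagrange.basisDivisor (v j) (v p)) 1 hnd
    rw [hcard, mul_one] at hprod
    have hc1 : ∀ p : ℕ, (Lagrange.basisDivisor (v j) (v p)).coeff 1 = (v j - v p)⁻¹ := by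
      intro p
      unfold Lagrange.basisDivisor
      rw [Polynomial.coeff_C_mul, Polynomial.coeff_sub, Polynomial.coeff_X_one,
        Polynomial.coeff_C]
      norm_num
    rw [Lagrange.basis, hprod]
    simp only [hc1]
    rw [Finset.prod_inv_distrib]
    rfl
  rw [Finset.sum_congr rfl (fun j hj => by rw [hbasis j hj])] at hco
  have : S z i x = ∑ j ∈ s, v j ^ x * lam z i j := by
    rw [S_def]
    exact Finset.sum_congr rfl (fun j _ => mul_comm _ _)
  rw [this, ← hco]
  by_cases h : x = mm
  · simp [h]
  · simp [h, Ne.symm h]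

lemma nod_gap (z i : ℕ) {j j' : ℕ} (h : j < j') :
    (Gg z i : ℝ) ≤ ((nod z i j' : ℕ) : ℝ) - ((nod z i j : ℕ) : ℝ) := by
  have hle : nod z i j + Gg z i ≤ nod z i j' := by
    have h2 : (j + 1) * Gg z i ≤ j' * Gg z i := Nat.mul_le_mul_right _ h
    rw [Nat.succ_mul] at h2
    unfold nod
    omega
  have : ((nod z i j + Gg z i : ℕ) : ℝ) ≤ ((nod z i j' : ℕ) : ℝ) := by exact_mod_cast hle
  push_cast at this
  linarith

lemma lam_abs_le (z i : ℕ) (j : ℕ) (hj : j ∈ Finset.range (z + i + 1)) :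
    |lam z i j| ≤ ((Gg z i : ℝ))⁻¹ ^ (z + i) := by
  have hG1 : (1 : ℝ) ≤ (Gg z i : ℝ) := by exact_mod_cast one_le_Gg z i
  have hGpos : (0 : ℝ) < (Gg z i : ℝ) := lt_of_lt_of_le one_pos hG1
  have key : (Gg z i : ℝ) ^ (z + i)
      ≤ ∏ j' ∈ (Finset.range (z + i + 1)).erase j,
          |((Bb z i + j * Gg z i : ℕ) : ℝ) - ((Bb z i + j' * Gg z i : ℕ) : ℝ)| := by
    calc (Gg z i : ℝ) ^ (z + i)
        = ∏ _j' ∈ (Finset.range (z + i + 1)).erase j, (Gg z i : ℝ) := by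
          rw [Finset.prod_const, Finset.card_erase_of_mem hj, Finset.card_range]
          norm_num
      _ ≤ _ := by
          apply Finset.prod_le_prod
          · intro _ _; linarith
          · intro j' hj'
            have hne : j' ≠ j := (Finset.mem_erase.mp hj').1
            rcases lt_or_gt_of_ne hne with hlt | hgt
            · have := nod_gap z i hlt
              unfold nod at this
              rw [abs_of_nonneg (by linarith)]
              linarith
            · have := nod_gap z i hgt
              unfold nod at this
              rw [abs_of_nonpos (by linarith)]
              linarith
  have hprodpos : (0 : ℝ) < ∏ j' ∈ (Finset.range (z + i + 1)).erase j,
      |((Bb z i + j * Gg z i : ℕ) : ℝ) - ((Bb z i + j' * Gg z i : ℕ) : ℝ)| :=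
    lt_of_lt_of_le (pow_pos hGpos _) key
  unfold lam wt
  rw [abs_inv, Finset.abs_prod, inv_pow]
  exact (inv_le_inv₀ hprodpos (pow_pos hGpos _)).mpr key

lemma nod_le (z i j : ℕ) (hj : j ≤ z + i) :
    (nod z i j : ℝ) ≤ ((z + i + 1 : ℕ) : ℝ) * (Gg z i : ℝ) := by
  have h1 : nod z i j ≤ (z + i + 1) * Gg z i := by
    have h2 : j * Gg z i ≤ (z + i) * Gg z i := Nat.mul_le_mul_right _ hj
    have h3 := Bb_le_Gg z i
    unfold nod
    nlinarith
  exact_mod_cast h1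

lemma Gg_ge (z i : ℕ) :
    ((z + i + 1 : ℕ) : ℝ) ^ (z + i + 1) * (|eps z i| + 1) * 2 ^ i ≤ (Gg z i : ℝ) := by
  rw [Gg_eq, gch]
  push_cast
  have h := Nat.le_ceil (((z + i + 1 : ℕ) : ℝ) ^ (z + i + 1) * (|eps z i| + 1) * 2 ^ i)
  have hB : (0 : ℝ) ≤ (Bb z i : ℝ) := Nat.cast_nonneg _
  push_cast at h
  linarith

lemma block_bound (z i x : ℕ) (hx : 2 * x ≤ z + i) :
    ∑ j ∈ Finset.range (z + i + 1), |eps z i * lam z i j| * ((nod z i j : ℕ) : ℝ) ^ x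
      ≤ (1 / 2 : ℝ) ^ i := by
  by_cases hmm0 : z + i = 0
  · have hz : z = 0 := by omega
    have hi : i = 0 := by omega
    have hx0 : x = 0 := by omega
    subst hz; subst hi; subst hx0
    norm_num
    unfold lam wt
    rw [eps_zero]
    norm_num
  · -- main case
    set mm := z + i with hmmdef
    have hmm1 : 1 ≤ mm := by omega
    have hxmm : x + 1 ≤ mm := by omega
    have hG1 : (1 : ℝ) ≤ (Gg z i : ℝ) := by exact_mod_cast one_le_Gg z i
    have hGpos : (0 : ℝ) < (Gg z i : ℝ) := lt_of_lt_of_le one_pos hG1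
    set G : ℝ := (Gg z i : ℝ) with hGdef
    set E : ℝ := |eps z i| with hEdef
    have hEnn : 0 ≤ E := abs_nonneg _
    set M : ℝ := ((mm + 1 : ℕ) : ℝ) with hMdef
    have hM1 : (1 : ℝ) ≤ M := by rw [hMdef]; exact_mod_cast Nat.succ_le_succ (Nat.zero_le mm)
    have hterm : ∀ j ∈ Finset.range (mm + 1),
        |eps z i * lam z i j| * ((nod z i j : ℕ) : ℝ) ^ x
          ≤ E * (G⁻¹ ^ mm * (M * G) ^ x) := by
      intro j hj
      rw [abs_mul]
      have h1 : |lam z i j| ≤ G⁻¹ ^ mm := lam_abs_le z i j hj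
      have h2 : ((nod z i j : ℕ) : ℝ) ^ x ≤ (M * G) ^ x := by
        apply pow_le_pow_left₀ (Nat.cast_nonneg _)
        exact nod_le z i j (Nat.lt_succ_iff.mp (Finset.mem_range.mp hj))
      have h3 : (0 : ℝ) ≤ ((nod z i j : ℕ) : ℝ) ^ x := by positivity
      have h4 : (0 : ℝ) ≤ |lam z i j| := abs_nonneg _
      have h5 : (0 : ℝ) ≤ G⁻¹ ^ mm := by positivity
      calc E * |lam z i j| * ((nod z i j : ℕ) : ℝ) ^ x
          ≤ E * (G⁻¹ ^ mm) * ((M * G) ^ x) := by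
            apply mul_le_mul (mul_le_mul le_rfl h1 h4 hEnn) h2 h3 (by positivity)
        _ = E * (G⁻¹ ^ mm * (M * G) ^ x) := by ring
    have hsum : ∑ j ∈ Finset.range (mm + 1),
        |eps z i * lam z i j| * ((nod z i j : ℕ) : ℝ) ^ x
          ≤ M * (E * (G⁻¹ ^ mm * (M * G) ^ x)) := by
      calc ∑ j ∈ Finset.range (mm + 1), |eps z i * lam z i j| * ((nod z i j : ℕ) : ℝ) ^ x
          ≤ ∑ _j ∈ Finset.range (mm + 1), E * (G⁻¹ ^ mm * (M * G) ^ x) :=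
            Finset.sum_le_sum hterm
        _ = M * (E * (G⁻¹ ^ mm * (M * G) ^ x)) := by
            rw [Finset.sum_const, Finset.card_range, nsmul_eq_mul, hMdef]
    refine le_trans hsum ?_
    -- M * (E * (G⁻¹ ^ mm * (M*G)^x)) = E * M^(x+1) * G^x / G^mm ≤ E * M^(mm+1) / G
    have hGne : G ≠ 0 := ne_of_gt hGpos
    have hGx : G⁻¹ ^ mm * G ^ x ≤ G⁻¹ := by
      have h : G ^ x * G ≤ G ^ mm := by
        rw [← pow_succ]
        exact pow_le_pow_right₀ hG1 hxmm
      calc G⁻¹ ^ mm * G ^ x = G ^ x / G ^ mm := by rw [inv_pow]; ring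
        _ ≤ G⁻¹ := by
            rw [div_le_iff₀ (by positivity)]
            calc G ^ x = G⁻¹ * (G ^ x * G) := by field_simp
              _ ≤ G⁻¹ * G ^ mm := by
                  apply mul_le_mul_of_nonneg_left h (by positivity)
    have hMx : M ^ (x + 1) ≤ M ^ (mm + 1) := pow_le_pow_right₀ hM1 (by omega)
    have step1 : M * (E * (G⁻¹ ^ mm * (M * G) ^ x)) ≤ E * M ^ (mm + 1) * G⁻¹ := by
      have expand : M * (E * (G⁻¹ ^ mm * (M * G) ^ x))
          = E * M ^ (x + 1) * (G⁻¹ ^ mm * G ^ x) := by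
        rw [mul_pow]; ring
      rw [expand]
      calc E * M ^ (x + 1) * (G⁻¹ ^ mm * G ^ x)
          ≤ E * M ^ (x + 1) * G⁻¹ := by
            apply mul_le_mul_of_nonneg_left hGx (by positivity)
        _ ≤ E * M ^ (mm + 1) * G⁻¹ := by
            apply mul_le_mul_of_nonneg_right (mul_le_mul_of_nonneg_left hMx hEnn)
              (by positivity)
    refine le_trans step1 ?_
    -- E * M^(mm+1) * G⁻¹ ≤ (1/2)^i  since  G ≥ M^(mm+1) * (E+1) * 2^i
    have hGge : M ^ (mm + 1) * (E + 1) * 2 ^ i ≤ G := Gg_ge z i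
    rw [show E * M ^ (mm + 1) * G⁻¹ = E * M ^ (mm + 1) / G by ring, div_le_iff₀ hGpos]
    calc E * M ^ (mm + 1) ≤ (1 / 2) ^ i * (M ^ (mm + 1) * (E + 1) * 2 ^ i) := by
          have h2i : ((1 : ℝ) / 2) ^ i * 2 ^ i = 1 := by
            rw [div_pow, one_pow, div_mul_cancel₀]
            positivity
          have : (1 / 2 : ℝ) ^ i * (M ^ (mm + 1) * (E + 1) * 2 ^ i)
              = M ^ (mm + 1) * (E + 1) := by
            rw [show (1 / 2 : ℝ) ^ i * (M ^ (mm + 1) * (E + 1) * 2 ^ i)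
              = ((1 / 2 : ℝ) ^ i * 2 ^ i) * (M ^ (mm + 1) * (E + 1)) by ring, h2i, one_mul]
          rw [this]
          nlinarith [pow_pos (lt_of_lt_of_le one_pos hM1) (mm + 1)]
      _ ≤ (1 / 2) ^ i * G := by
          apply mul_le_mul_of_nonneg_left hGge (by positivity)

lemma S_eq_zero_of_lt (z i x : ℕ) (h : x < z + i) : S z i x = 0 := by
  rw [S_eval z i x (le_of_lt h)]
  simp [Nat.ne_of_lt h]

lemma S_top (z r : ℕ) : S z r (z + r) = 1 := by
  rw [S_eval z r (z + r) le_rfl]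
  simp

lemma sum_eps_S (z x : ℕ) (hx : z ≤ x) :
    ∑ i ∈ Finset.range (x - z + 1), eps z i * S z i x
      = if x = z then (x.factorial : ℝ) else 0 := by
  obtain ⟨r, rfl⟩ : ∃ r, x = z + r := ⟨x - z, by omega⟩
  have hre : z + r - z = r := by omega
  rw [hre, Finset.sum_range_succ, S_top z r, mul_one]
  cases r with
  | zero =>
    simp [eps_zero]
  | succ r' =>
    have hxz : ¬ z + (r' + 1) = z := by omega
    rw [eps_succ, if_neg hxz]
    ring

/-- index type for the nodes -/
abbrev Idx (z : ℕ) := Σ i : ℕ, Fin (z + i + 1)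

noncomputable def emb (z : ℕ) : Idx z → ℕ := fun p => nod z p.1 p.2 - 1

lemma emb_inj (z : ℕ) : Function.Injective (emb z) := by
  rintro ⟨i, j⟩ ⟨i', j'⟩ h
  have h1 := one_le_nod z i j
  have h2 := one_le_nod z i' j'
  have h' : nod z i (j : ℕ) = nod z i' (j' : ℕ) := by
    unfold emb at h; simp only at h; omega
  obtain ⟨rfl, hj⟩ := nod_inj z i i' j j'
    (Nat.lt_succ_iff.mp j.isLt) (Nat.lt_succ_iff.mp j'.isLt) h'
  simp [Fin.ext_iff, hj]

lemma emb_cast (z : ℕ) (p : Idx z) :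
    ((emb z p : ℕ) : ℝ) + 1 = ((nod z p.1 p.2 : ℕ) : ℝ) := by
  have h1 := one_le_nod z p.1 p.2
  unfold emb
  rw [Nat.cast_sub h1]
  norm_num

end Stmt6

theorem stmt6 (z : ℕ) :
    ∃ c : ℕ → ℝ, ∀ x : ℕ,
      HasSum (fun k : ℕ =>
          c k * ((k : ℝ) + 1) ^ x * Real.exp (-((k : ℝ) + 1)) / (x.factorial : ℝ))
        (if x = z then 1 else 0) ∧
      Summable (fun k : ℕ =>
          |c k * ((k : ℝ) + 1) ^ x * Real.exp (-((k : ℝ) + 1)) / (x.factorial : ℝ)|) := by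
  classical
  open Stmt6 in
  refine ⟨fun k => Function.extend (emb z)
      (fun p => eps z p.1 * lam z p.1 p.2) 0 k * Real.exp ((k : ℝ) + 1), fun x => ?_⟩
  set F : Idx z → ℝ :=
    fun p => eps z p.1 * lam z p.1 p.2 * ((nod z p.1 p.2 : ℕ) : ℝ) ^ x / (x.factorial : ℝ)
    with hF
  have hxfac : (0 : ℝ) < (x.factorial : ℝ) := by exact_mod_cast x.factorial_pos
  have hfun : (fun k : ℕ =>
      (Function.extend (emb z) (fun p => eps z p.1 * lam z p.1 p.2) 0 k
          * Real.exp ((k : ℝ) + 1)) * ((k : ℝ) + 1) ^ x * Real.exp (-((k : ℝ) + 1))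
        / (x.factorial : ℝ))
      = Function.extend (emb z) F 0 := by
    funext k
    by_cases h : ∃ p, emb z p = k
    · obtain ⟨p, rfl⟩ := h
      rw [Function.Injective.extend_apply (emb_inj z),
        Function.Injective.extend_apply (emb_inj z)]
      rw [emb_cast]
      rw [hF]
      rw [Real.exp_neg]
      field_simp [Real.exp_ne_zero]
    · rw [Function.extend_apply' _ _ _ h, Function.extend_apply' _ _ _ h]
      simp
  -- fiberwise sums
  set Gf : ℕ → ℝ := fun i => eps z i * S z i x / (x.factorial : ℝ) with hGf
  have hfib : ∀ i, HasSum (fun j : Fin (z + i + 1) => F ⟨i, j⟩) (Gf i) := by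
    intro i
    have h1 := hasSum_fintype (fun j : Fin (z + i + 1) => F ⟨i, j⟩)
    have h2 : ∑ j : Fin (z + i + 1), F ⟨i, j⟩ = Gf i := by
      rw [hGf, hF]
      simp only
      rw [Fin.sum_univ_eq_sum_range
        (fun j => eps z i * lam z i j * ((nod z i j : ℕ) : ℝ) ^ x / (x.factorial : ℝ))]
      rw [S_def, Finset.mul_sum, Finset.sum_div]
      exact Finset.sum_congr rfl (fun j _ => by ring)
    rwa [h2] at h1
  -- absolute summability over the sigma type
  have habs : Summable (fun p : Idx z => |F p|) := by
    apply (summable_sigma_of_nonneg (fun p => abs_nonneg _)).mpr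
    constructor
    · intro i
      exact ⟨_, hasSum_fintype _⟩
    · have hAeq : ∀ i, (∑' j : Fin (z + i + 1), |F ⟨i, j⟩|)
          = (∑ j ∈ Finset.range (z + i + 1),
              |eps z i * lam z i j| * ((nod z i j : ℕ) : ℝ) ^ x) / (x.factorial : ℝ) := by
        intro i
        rw [tsum_fintype]
        have habsF : ∀ j : Fin (z + i + 1), |F ⟨i, j⟩|
            = (fun j' : ℕ => |eps z i * lam z i j'| * ((nod z i j' : ℕ) : ℝ) ^ x
                / (x.factorial : ℝ)) (j : ℕ) := by
          intro j
          rw [hF]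
          simp only
          rw [abs_div, abs_mul, abs_of_nonneg (by positivity :
              (0:ℝ) ≤ ((nod z i (j : ℕ) : ℕ) : ℝ) ^ x),
            abs_of_nonneg (le_of_lt hxfac)]
        rw [Finset.sum_congr rfl (fun j _ => habsF j)]
        rw [Fin.sum_univ_eq_sum_range
          (fun j' : ℕ => |eps z i * lam z i j'| * ((nod z i j' : ℕ) : ℝ) ^ x
            / (x.factorial : ℝ))]
        rw [Finset.sum_div]
      rw [funext hAeq]
      rw [← summable_nat_add_iff (2 * x)]
      apply Summable.of_nonneg_of_le (f := fun n => (1 / 2 : ℝ) ^ (n + 2 * x))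
      · intro n
        positivity
      · intro n
        have hb := block_bound z (n + 2 * x) x (by omega)
        have hnn : (0:ℝ) ≤ ∑ j ∈ Finset.range (z + (n + 2 * x) + 1),
            |eps z (n + 2 * x) * lam z (n + 2 * x) j| * ((nod z (n + 2 * x) j : ℕ) : ℝ) ^ x := by
          apply Finset.sum_nonneg
          intro j _
          positivity
        have hfac1 : (1:ℝ) ≤ (x.factorial : ℝ) := by
          exact_mod_cast Nat.one_le_iff_ne_zero.mpr x.factorial_ne_zero
        calc (∑ j ∈ Finset.range (z + (n + 2 * x) + 1),
              |eps z (n + 2 * x) * lam z (n + 2 * x) j| * ((nod z (n + 2 * x) j : ℕ) : ℝ) ^ x)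
                / (x.factorial : ℝ)
            ≤ (∑ j ∈ Finset.range (z + (n + 2 * x) + 1),
              |eps z (n + 2 * x) * lam z (n + 2 * x) j| * ((nod z (n + 2 * x) j : ℕ) : ℝ) ^ x) :=
              div_le_self hnn hfac1
          _ ≤ (1 / 2 : ℝ) ^ (n + 2 * x) := hb
      · simp only [pow_add]
        exact summable_geometric_two.mul_right _
  have hsumF : Summable F := Summable.of_abs habs
  -- total over blocks
  have htot : HasSum Gf (if x = z then 1 else 0) := by
    rcases le_or_gt z x with hzx | hxz
    · have hvan : ∀ i ∉ Finset.range (x - z + 1), Gf i = 0 := by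
        intro i hi
        have : x < z + i := by
          have := Finset.mem_range.not.mp hi
          omega
        rw [hGf]
        simp only
        rw [S_eq_zero_of_lt z i x this]
        ring
      have h1 := hasSum_sum_of_ne_finset_zero (L := SummationFilter.unconditional ℕ) hvan
      have h2 : ∑ i ∈ Finset.range (x - z + 1), Gf i = (if x = z then 1 else 0) := by
        rw [hGf]
        simp only
        rw [← Finset.sum_div, sum_eps_S z x hzx]
        by_cases h : x = z
        · rw [if_pos h, if_pos h, div_self (ne_of_gt hxfac)]
        · rw [if_neg h, if_neg h, zero_div]
      rwa [h2] at h1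
    · have hvan : ∀ i, Gf i = 0 := by
        intro i
        rw [hGf]
        simp only
        rw [S_eq_zero_of_lt z i x (by omega)]
        ring
      have : Gf = fun _ => (0:ℝ) := funext hvan
      rw [this, if_neg (by omega : ¬ x = z)]
      exact hasSum_zero
  have hFsum : HasSum F (if x = z then 1 else 0) :=
    HasSum.sigma_of_hasSum htot hfib hsumF
  constructor
  · rw [hfun]
    exact (hasSum_extend_zero (emb_inj z)).mpr hFsum
  · have habs' : (fun k : ℕ =>
        |(Function.extend (emb z) (fun p => eps z p.1 * lam z p.1 p.2) 0 k
            * Real.exp ((k : ℝ) + 1)) * ((k : ℝ) + 1) ^ x * Real.exp (-((k : ℝ) + 1))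
          / (x.factorial : ℝ)|)
        = Function.extend (emb z) (fun p => |F p|) 0 := by
      funext k
      rw [congrFun hfun k]
      by_cases h : ∃ p, emb z p = k
      · obtain ⟨p, rfl⟩ := h
        rw [Function.Injective.extend_apply (emb_inj z),
          Function.Injective.extend_apply (emb_inj z)]
      · rw [Function.extend_apply' _ _ _ h, Function.extend_apply' _ _ _ h]
        simp
    rw [habs']
    exact (summable_extend_zero (emb_inj z)).mpr habs
end
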